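/- Let (p_n)_{n≥1} ⊆ [1,∞) and (σ_n)_{n≥1} ⊆ ℝ with inf_n σ_n < sup_n σ_n, and fix n̄ ≥ 2 such that {σ_1,…,σ_{n̄}} is not a singleton. Set A := ∪_{n≥1} ( Σ_{k=1}^n [0,p_k]·(1,σ_k) ) ⊆ ℝ². Then A ⊆ dom H_FD ⊆ cl A, and int(dom H_FD) = int A = ∪_{n≥n̄} Σ_{k=1}^n (0,p_k)·(1,σ_k). -/

import Mathlib

open Filter

/-- The Bose–Einstein entropy, with values in `ℝ ∪ {+∞}`. -/
noncomputable def EBEe (u : ℝ) : EReal :=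
  if 0 ≤ u then ((u * Real.log u - (1 + u) * Real.log (1 + u) : ℝ) : EReal) else ⊤

/-- The Maxwell–Boltzmann entropy, with values in `ℝ ∪ {+∞}`. -/
noncomputable def EMBe (u : ℝ) : EReal :=
  if 0 ≤ u then ((u * (Real.log u - 1) : ℝ) : EReal) else ⊤

/-- The Fermi–Dirac entropy, with values in `ℝ ∪ {+∞}`. -/
noncomputable def EFDe (u : ℝ) : EReal :=
  if 0 ≤ u ∧ u ≤ 1 then ((u * Real.log u + (1 - u) * Real.log (1 - u) : ℝ) : EReal) else ⊤

/-- The sum of a series in `ℝ ∪ {±∞}`, following the paper's convention: the limit of the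
partial sums when this limit exists in `[−∞,+∞]`, and `+∞` otherwise. -/
noncomputable def serSum (β : ℕ → EReal) : EReal :=
  @dite _ (∃ l : EReal, Tendsto (fun N => ∑ k ∈ Finset.range N, β k) atTop (nhds l))
    (Classical.dec _) (fun h => h.choose) (fun _ => ⊤)

/-- `S(u,v)`: the set of sequences of nonnegative reals with `Σ u_n = u` and `Σ σ_n u_n = v`
(sums as limits of partial sums). -/
def Sfeas (σ : ℕ → ℝ) (u v : ℝ) : Set (ℕ → ℝ) :=
  {w | (∀ n, 0 ≤ w n) ∧
    Tendsto (fun N => ∑ k ∈ Finset.range N, w k) atTop (nhds u) ∧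
    Tendsto (fun N => ∑ k ∈ Finset.range N, σ k * w k) atTop (nhds v)}

/-- The value (marginal) function `H_W(u,v) = inf { Σ p_n W(u_n/p_n) : (u_n) ∈ S(u,v) }`,
with `inf ∅ = +∞`. -/
noncomputable def Hval (p σ : ℕ → ℝ) (W : ℝ → EReal) (u v : ℝ) : EReal :=
  sInf ((fun w => serSum fun n => (p n : EReal) * W (w n / p n)) '' Sfeas σ u v)

/-- The convex set `A = ∪_n Σ_{k=1}^n [0,p_k]·(1,σ_k)`. -/
def Aset (p σ : ℕ → ℝ) : Set (ℝ × ℝ) :=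
  ⋃ n : ℕ, {z : ℝ × ℝ | ∃ t : Fin n → ℝ, (∀ k, 0 ≤ t k ∧ t k ≤ p k.1) ∧
    z = ∑ k, t k • ((1 : ℝ), σ k.1)}

/-! Feasible sequences with finite support and `u_n ≤ p_n` have finite Fermi–Dirac cost, while
a sequence of finite cost must satisfy `u_n ≤ p_n` for all `n`, since `E_FD = +∞` beyond `1`;
its partial sums then lie in `A` and converge to `(u,v)`. Hence `A ⊆ dom H_FD ⊆ cl A`.

For `n ≥ n̄` the vectors `(1,σ_k)`, `k < n`, span `ℝ²`, so the open zonotope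
`Σ_{k<n} (0,p_k)·(1,σ_k)` is the image of an open box under a surjective linear map, hence open.
The union `U` of these open zonotopes is convex (the closed zonotope of order `n` lies in the
closure of the open one of any order `m ≥ n`) and dense in `A`. A set squeezed between an open
convex set `U` and its closure has interior `U`. -/

open Set

theorem Finset.sum_range_eq_of_eq_zero {M : Type*} [AddCommMonoid M] {f : ℕ → M} {n N : ℕ}
    (h : n ≤ N) (hf : ∀ k, n ≤ k → f k = 0) : ∑ k ∈ range N, f k = ∑ k ∈ range n, f k :=
  (sum_subset (range_subset_range.2 h) fun k _ hk => hf k (by simpa using hk)).symm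

theorem tendsto_sum_range_of_eq_zero {M : Type*} [AddCommMonoid M] [TopologicalSpace M]
    {f : ℕ → M} {n : ℕ} (hf : ∀ k, n ≤ k → f k = 0) :
    Tendsto (fun N => ∑ k ∈ Finset.range N, f k) atTop (nhds (∑ k ∈ Finset.range n, f k)) :=
  (hasSum_sum_of_ne_finset_zero fun k hk => hf k (by simpa using hk)).tendsto_sum_nat

theorem Convex.interior_eq_of_subset_of_subset_closure {E : Type*} [NormedAddCommGroup E]
    [NormedSpace ℝ E] {U S : Set E} (hconv : Convex ℝ U) (hU : IsOpen U) (hne : U.Nonempty)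
    (hUS : U ⊆ S) (hSU : S ⊆ closure U) : interior S = U := by
  refine subset_antisymm ?_ (hU.subset_interior_iff.2 hUS)
  calc interior S ⊆ interior (closure U) := interior_mono hSU
    _ = U := by
      rw [hconv.interior_closure_eq_interior_of_nonempty_interior (by rwa [hU.interior_eq]),
        hU.interior_eq]

section BoxSum

variable {E : Type*} [NormedAddCommGroup E] [NormedSpace ℝ E]

/-- The Minkowski sum `Σ_{k<n} I_k·v_k`; `Aset p σ` is its union over `n` for `I_k = [0,p_k]`,
`v_k = (1,σ_k)`. -/
def boxSum (I : ℕ → Set ℝ) (v : ℕ → E) (n : ℕ) : Set E :=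
  {z | ∃ t : Fin n → ℝ, (∀ k : Fin n, t k ∈ I k) ∧ z = ∑ k : Fin n, t k • v k}

variable {I J : ℕ → Set ℝ} {v : ℕ → E} {n N : ℕ}

theorem boxSum_eq_image (I : ℕ → Set ℝ) (v : ℕ → E) (n : ℕ) :
    boxSum I v n = Fintype.linearCombination ℝ (fun k : Fin n => v k) '' univ.pi fun k => I k := by
  ext z
  simp [boxSum, Fintype.linearCombination_apply, eq_comm]

theorem mem_boxSum_iff {z : E} :
    z ∈ boxSum I v n ↔ ∃ t : ℕ → ℝ, (∀ k < n, t k ∈ I k) ∧ z = ∑ k ∈ Finset.range n, t k • v k := by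
  constructor
  · rintro ⟨t, ht, rfl⟩
    refine ⟨fun k => if h : k < n then t ⟨k, h⟩ else 0, fun k hk => by simpa [hk] using ht ⟨k, hk⟩,
      ?_⟩
    rw [← Fin.sum_univ_eq_sum_range (fun k => (if h : k < n then t ⟨k, h⟩ else 0) • v k)]
    simp
  · rintro ⟨t, ht, rfl⟩
    exact ⟨fun k => t k, fun k => ht k k.isLt, (Fin.sum_univ_eq_sum_range (fun k => t k • v k) n).symm⟩

theorem boxSum_mono (hIJ : ∀ k, I k ⊆ J k) : boxSum I v n ⊆ boxSum J v n :=
  fun _ ⟨t, ht, hz⟩ => ⟨t, fun k => hIJ k (ht k), hz⟩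

theorem boxSum_subset_boxSum_of_le (h0 : ∀ k, (0 : ℝ) ∈ I k) (h : n ≤ N) :
    boxSum I v n ⊆ boxSum I v N := by
  intro z hz
  obtain ⟨t, ht, rfl⟩ := mem_boxSum_iff.1 hz
  refine mem_boxSum_iff.2 ⟨fun k => if k < n then t k else 0, fun k _ => ?_, ?_⟩
  · dsimp only
    split_ifs with hk
    exacts [ht k hk, h0 k]
  · rw [Finset.sum_range_eq_of_eq_zero h fun k hk => by simp [not_lt.2 hk]]
    exact Finset.sum_congr rfl fun k hk => by simp [Finset.mem_range.1 hk]

theorem convex_boxSum (hI : ∀ k, Convex ℝ (I k)) : Convex ℝ (boxSum I v n) := by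
  rw [boxSum_eq_image]
  exact (convex_pi fun (k : Fin n) _ => hI k).linear_image _

theorem isOpen_boxSum [FiniteDimensional ℝ E] (hI : ∀ k, IsOpen (I k))
    (hv : Submodule.span ℝ (v '' Iio n) = ⊤) : IsOpen (boxSum I v n) := by
  have hsurj : Function.Surjective (Fintype.linearCombination ℝ fun k : Fin n => v k) := by
    rw [← LinearMap.range_eq_top, Fintype.range_linearCombination, range_comp' v Fin.val,
      Fin.range_val, hv]
  rw [boxSum_eq_image]
  exact LinearMap.isOpenMap_of_finiteDimensional _ hsurj _
    (isOpen_set_pi finite_univ fun k _ => hI k)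

theorem boxSum_closure_subset_closure_boxSum :
    boxSum (fun k => closure (I k)) v n ⊆ closure (boxSum I v n) := by
  rw [boxSum_eq_image, boxSum_eq_image, ← closure_pi_set]
  exact image_closure_subset_closure_image (LinearMap.continuous_of_finiteDimensional _)

end BoxSum

section Zonotope

variable {E : Type*} [NormedAddCommGroup E] [NormedSpace ℝ E] {p : ℕ → ℝ} {v : ℕ → E} {nbar : ℕ}

theorem boxSum_Icc_subset_closure_boxSum_Ioo (hp : ∀ k, 0 < p k) (n : ℕ) :
    boxSum (fun k => Icc 0 (p k)) v n ⊆ closure (boxSum (fun k => Ioo 0 (p k)) v n) := by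
  simpa only [closure_Ioo (hp _).ne] using
    boxSum_closure_subset_closure_boxSum (I := fun k => Ioo 0 (p k)) (v := v) (n := n)

theorem isOpen_boxSum_Ioo [FiniteDimensional ℝ E] (hv : Submodule.span ℝ (v '' Iio nbar) = ⊤) {n : ℕ} (hn : nbar ≤ n) :
    IsOpen (boxSum (fun k => Ioo 0 (p k)) v n) :=
  isOpen_boxSum (fun _ => isOpen_Ioo)
    (eq_top_mono (Submodule.span_mono (image_mono (Iio_subset_Iio hn))) hv)

theorem convex_iUnion_boxSum_Ioo [FiniteDimensional ℝ E] (hp : ∀ k, 0 < p k) (hv : Submodule.span ℝ (v '' Iio nbar) = ⊤) :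
    Convex ℝ (⋃ n ∈ Ici nbar, boxSum (fun k => Ioo 0 (p k)) v n) := by
  have key : ∀ {n m}, nbar ≤ m → n ≤ m → ∀ x ∈ boxSum (fun k => Ioo 0 (p k)) v n,
      ∀ y ∈ boxSum (fun k => Ioo 0 (p k)) v m,
      openSegment ℝ x y ⊆ boxSum (fun k => Ioo 0 (p k)) v m := by
    intro n m hm hnm x hx y hy
    have hopen := isOpen_boxSum_Ioo (p := p) hv hm
    have hx' : x ∈ closure (boxSum (fun k => Ioo 0 (p k)) v m) :=
      boxSum_Icc_subset_closure_boxSum_Ioo hp m <|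
        boxSum_subset_boxSum_of_le (fun k => left_mem_Icc.2 (hp k).le) hnm <|
          boxSum_mono (fun _ => Ioo_subset_Icc_self) hx
    rw [← hopen.interior_eq] at hy ⊢
    exact (convex_boxSum fun _ => convex_Ioo _ _).openSegment_closure_interior_subset_interior
      hx' hy
  refine convex_iff_openSegment_subset.2 fun x hx y hy => ?_
  obtain ⟨n, hn, hx⟩ := mem_iUnion₂.1 hx
  obtain ⟨m, hm, hy⟩ := mem_iUnion₂.1 hy
  rcases le_total n m with h | h
  · exact (key hm h x hx y hy).trans (subset_biUnion_of_mem hm)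
  · rw [openSegment_symm]
    exact (key hn h y hy x hx).trans (subset_biUnion_of_mem hn)

theorem interior_eq_iUnion_boxSum_Ioo [FiniteDimensional ℝ E] (hp : ∀ k, 0 < p k)
    (hv : Submodule.span ℝ (v '' Iio nbar) = ⊤) {S : Set E}
    (hAS : ⋃ n, boxSum (fun k => Icc 0 (p k)) v n ⊆ S)
    (hSA : S ⊆ closure (⋃ n, boxSum (fun k => Icc 0 (p k)) v n)) :
    interior S = ⋃ n ∈ Ici nbar, boxSum (fun k => Ioo 0 (p k)) v n := by
  set U := ⋃ n ∈ Ici nbar, boxSum (fun k => Ioo 0 (p k)) v n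
  have hUA : U ⊆ ⋃ n, boxSum (fun k => Icc 0 (p k)) v n :=
    iUnion₂_subset fun n _ =>
      (boxSum_mono fun _ => Ioo_subset_Icc_self).trans (subset_iUnion_of_subset n subset_rfl)
  have hAU : ⋃ n, boxSum (fun k => Icc 0 (p k)) v n ⊆ closure U := iUnion_subset fun n =>
    (boxSum_subset_boxSum_of_le (fun k => left_mem_Icc.2 (hp k).le) (le_max_left n nbar)).trans <|
      (boxSum_Icc_subset_closure_boxSum_Ioo hp _).trans <|
        closure_mono (subset_biUnion_of_mem (u := fun n => boxSum (fun k => Ioo 0 (p k)) v n)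
          (le_max_right n nbar))
  have hne : U.Nonempty := ⟨_, mem_biUnion (mem_Ici.2 le_rfl)
    ⟨fun k => p k / 2, fun k => ⟨half_pos (hp k), half_lt_self (hp k)⟩, rfl⟩⟩
  exact (convex_iUnion_boxSum_Ioo hp hv).interior_eq_of_subset_of_subset_closure
    (isOpen_biUnion fun n hn => isOpen_boxSum_Ioo hv hn) hne (hUA.trans hAS)
    (hSA.trans (closure_minimal hAU isClosed_closure))

end Zonotope

theorem span_pair_one_eq_top {a b : ℝ} (h : a ≠ b) :
    Submodule.span ℝ {((1 : ℝ), a), (1, b)} = ⊤ := by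
  have hba : b - a ≠ 0 := sub_ne_zero.2 h.symm
  refine eq_top_iff.2 fun z _ => Submodule.mem_span_pair.2
    ⟨(b * z.1 - z.2) / (b - a), (z.2 - a * z.1) / (b - a), ?_⟩
  ext <;> simp <;> field_simp <;> ring

theorem sum_smul_one_mk (s : Finset ℕ) (w σ : ℕ → ℝ) :
    ∑ k ∈ s, w k • ((1 : ℝ), σ k) = (∑ k ∈ s, w k, ∑ k ∈ s, σ k * w k) := by
  ext <;> simp [Prod.fst_sum, Prod.snd_sum, mul_comm]

theorem serSum_eq_of_tendsto {β : ℕ → EReal} {l : EReal}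
    (h : Tendsto (fun N => ∑ k ∈ Finset.range N, β k) atTop (nhds l)) : serSum β = l := by
  have hex : ∃ l', Tendsto (fun N => ∑ k ∈ Finset.range N, β k) atTop (nhds l') := ⟨l, h⟩
  rw [serSum, dif_pos hex]
  exact tendsto_nhds_unique hex.choose_spec h

theorem serSum_eq_top_of_eq_top {β : ℕ → EReal} (hβ : ∀ k, β k ≠ ⊥) {m : ℕ} (hm : β m = ⊤) :
    serSum β = ⊤ := by
  refine serSum_eq_of_tendsto (tendsto_const_nhds.congr' ?_)
  filter_upwards [eventually_gt_atTop m] with N hN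
  rw [← Finset.add_sum_erase _ _ (Finset.mem_range.2 hN), hm, EReal.top_add_of_ne_bot]
  exact Finset.sum_induction _ (· ≠ ⊥) (fun _ _ ha hb => EReal.add_ne_bot_iff.2 ⟨ha, hb⟩)
    EReal.zero_ne_bot fun k _ => hβ k

theorem EFDe_of_mem_Icc {u : ℝ} (hu : u ∈ Icc (0 : ℝ) 1) :
    EFDe u = ((u * Real.log u + (1 - u) * Real.log (1 - u) : ℝ) : EReal) :=
  if_pos hu

theorem EFDe_zero : EFDe 0 = 0 := by
  simp [EFDe]

theorem EFDe_of_one_lt {u : ℝ} (hu : 1 < u) : EFDe u = ⊤ :=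
  if_neg fun h => hu.not_ge h.2

theorem coe_mul_EFDe_ne_bot {c : ℝ} (hc : 0 < c) (u : ℝ) : (c : EReal) * EFDe u ≠ ⊥ := by
  unfold EFDe
  split_ifs
  · exact EReal.coe_ne_bot _
  · rw [EReal.coe_mul_top_of_pos hc]
    exact top_ne_bot

section FermiDirac

variable {p σ w : ℕ → ℝ} {u v : ℝ}

theorem Hval_EFDe_lt_top_of_mem_Sfeas (hp : ∀ k, 0 < p k) (hw : w ∈ Sfeas σ u v)
    (hwp : ∀ k, w k ≤ p k) {n : ℕ} (hwn : ∀ k, n ≤ k → w k = 0) : Hval p σ EFDe u v < ⊤ := by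
  have hterm : ∀ k, (p k : EReal) * EFDe (w k / p k) < ⊤ := fun k => by
    rw [EFDe_of_mem_Icc ⟨div_nonneg (hw.1 k) (hp k).le, (div_le_one (hp k)).2 (hwp k)⟩,
      ← EReal.coe_mul]
    exact EReal.coe_lt_top _
  calc Hval p σ EFDe u v ≤ serSum fun k => (p k : EReal) * EFDe (w k / p k) :=
        sInf_le ⟨w, hw, rfl⟩
    _ = ∑ k ∈ Finset.range n, (p k : EReal) * EFDe (w k / p k) :=
        serSum_eq_of_tendsto (tendsto_sum_range_of_eq_zero fun k hk => by
          rw [hwn k hk, zero_div, EFDe_zero, mul_zero])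
    _ < ⊤ := Finset.sum_induction _ (· < ⊤) (fun _ _ ha hb => EReal.add_lt_top ha.ne hb.ne)
        EReal.zero_lt_top fun k _ => hterm k

theorem exists_mem_Sfeas_le_of_Hval_EFDe_lt_top (hp : ∀ k, 0 < p k)
    (h : Hval p σ EFDe u v < ⊤) : ∃ w ∈ Sfeas σ u v, ∀ k, w k ≤ p k := by
  obtain ⟨_, ⟨w, hw, rfl⟩, hlt⟩ := sInf_lt_iff.1 h
  refine ⟨w, hw, fun k => not_lt.1 fun hk => hlt.ne ?_⟩
  refine serSum_eq_top_of_eq_top (fun m => coe_mul_EFDe_ne_bot (hp m) _) (m := k) ?_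
  rw [EFDe_of_one_lt ((one_lt_div (hp k)).2 hk), EReal.coe_mul_top_of_pos (hp k)]

theorem exists_mem_Sfeas_of_mem_boxSum_Icc (hp : ∀ k, 0 < p k) {n : ℕ} {z : ℝ × ℝ}
    (hz : z ∈ boxSum (fun k => Icc 0 (p k)) (fun k => ((1 : ℝ), σ k)) n) :
    ∃ w ∈ Sfeas σ z.1 z.2, (∀ k, w k ≤ p k) ∧ ∀ k, n ≤ k → w k = 0 := by
  obtain ⟨t, ht, rfl⟩ := mem_boxSum_iff.1 hz
  set w : ℕ → ℝ := fun k => if k < n then t k else 0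
  have hwn : ∀ k, n ≤ k → w k = 0 := fun k hk => if_neg (not_lt.2 hk)
  have hsum : ∑ k ∈ Finset.range n, t k • ((1 : ℝ), σ k)
      = (∑ k ∈ Finset.range n, w k, ∑ k ∈ Finset.range n, σ k * w k) := by
    rw [← sum_smul_one_mk]
    exact Finset.sum_congr rfl fun k hk => by simp [w, Finset.mem_range.1 hk]
  refine ⟨w, ⟨fun k => ?_, ?_, ?_⟩, fun k => ?_, hwn⟩
  · by_cases hk : k < n
    · simpa [w, hk] using (ht k hk).1
    · simp [w, hk]
  · rw [hsum]
    exact tendsto_sum_range_of_eq_zero hwn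
  · rw [hsum]
    exact tendsto_sum_range_of_eq_zero fun k hk => by rw [hwn k hk, mul_zero]
  · by_cases hk : k < n
    · simpa [w, hk] using (ht k hk).2
    · simpa [w, hk] using (hp k).le

theorem mem_closure_iUnion_boxSum_Icc_of_mem_Sfeas (hw : w ∈ Sfeas σ u v) (hwp : ∀ k, w k ≤ p k) :
    (u, v) ∈ closure (⋃ n, boxSum (fun k => Icc 0 (p k)) (fun k => ((1 : ℝ), σ k)) n) :=
  mem_closure_of_tendsto (hw.2.1.prodMk_nhds hw.2.2) <| Eventually.of_forall fun N =>
    mem_iUnion.2 ⟨N, mem_boxSum_iff.2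
      ⟨w, fun k _ => ⟨hw.1 k, hwp k⟩, (sum_smul_one_mk (Finset.range N) w σ).symm⟩⟩

end FermiDirac

theorem stmt8_general (p σ : ℕ → ℝ) (hp : ∀ n, 1 ≤ p n)
    (nbar : ℕ) (hns : ∃ i j : ℕ, i < nbar ∧ j < nbar ∧ σ i ≠ σ j) :
    Aset p σ ⊆ {z : ℝ × ℝ | Hval p σ EFDe z.1 z.2 < ⊤} ∧
    {z : ℝ × ℝ | Hval p σ EFDe z.1 z.2 < ⊤} ⊆ closure (Aset p σ) ∧
    interior {z : ℝ × ℝ | Hval p σ EFDe z.1 z.2 < ⊤} = interior (Aset p σ) ∧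
    interior (Aset p σ) =
      ⋃ n ∈ Set.Ici nbar, {z : ℝ × ℝ | ∃ t : Fin n → ℝ, (∀ k, 0 < t k ∧ t k < p k.1) ∧
        z = ∑ k, t k • ((1 : ℝ), σ k.1)} := by
  have hp₀ : ∀ k, 0 < p k := fun k => one_pos.trans_le (hp k)
  obtain ⟨i, j, hi, hj, hσ⟩ := hns
  have hv : Submodule.span ℝ ((fun k => ((1 : ℝ), σ k)) '' Iio nbar) = ⊤ :=
    eq_top_mono (Submodule.span_mono (pair_subset (mem_image_of_mem _ hi)
      (mem_image_of_mem _ hj))) (span_pair_one_eq_top hσ)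
  have hAdom : Aset p σ ⊆ {z : ℝ × ℝ | Hval p σ EFDe z.1 z.2 < ⊤} := iUnion_subset fun n z hz => by
    obtain ⟨w, hw, hwp, hwn⟩ := exists_mem_Sfeas_of_mem_boxSum_Icc hp₀ hz
    exact Hval_EFDe_lt_top_of_mem_Sfeas hp₀ hw hwp hwn
  have hdomA : {z : ℝ × ℝ | Hval p σ EFDe z.1 z.2 < ⊤} ⊆ closure (Aset p σ) := fun z hz => by
    obtain ⟨w, hw, hwp⟩ := exists_mem_Sfeas_le_of_Hval_EFDe_lt_top hp₀ hz
    exact mem_closure_iUnion_boxSum_Icc_of_mem_Sfeas hw hwp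
  have hintA := interior_eq_iUnion_boxSum_Ioo hp₀ hv subset_rfl (subset_closure (s := Aset p σ))
  exact ⟨hAdom, hdomA, (interior_eq_iUnion_boxSum_Ioo hp₀ hv hAdom hdomA).trans hintA.symm, hintA⟩

/-- `A ⊆ dom H_FD ⊆ cl A` and `int (dom H_FD) = int A = ∪_{n ≥ n̄} Σ_{k=1}^n (0,p_k)·(1,σ_k)`. -/
theorem stmt8 (p σ : ℕ → ℝ) (hp : ∀ n, 1 ≤ p n)
    (hlt : (⨅ n, ((σ n : ℝ) : EReal)) < ⨆ n, ((σ n : ℝ) : EReal))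
    (nbar : ℕ) (hnbar : 2 ≤ nbar) (hns : ∃ i j : ℕ, i < nbar ∧ j < nbar ∧ σ i ≠ σ j) :
    Aset p σ ⊆ {z : ℝ × ℝ | Hval p σ EFDe z.1 z.2 < ⊤} ∧
    {z : ℝ × ℝ | Hval p σ EFDe z.1 z.2 < ⊤} ⊆ closure (Aset p σ) ∧
    interior {z : ℝ × ℝ | Hval p σ EFDe z.1 z.2 < ⊤} = interior (Aset p σ) ∧
    interior (Aset p σ) =
      ⋃ n ∈ Set.Ici nbar, {z : ℝ × ℝ | ∃ t : Fin n → ℝ, (∀ k, 0 < t k ∧ t k < p k.1) ∧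
        z = ∑ k, t k • ((1 : ℝ), σ k.1)} :=
  stmt8_general p σ hp nbar hns
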